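/- Let μ₁ be a probability measure on a Euclidean space X satisfying LSI(ρ₁), and let δψ : X → ℝ be bounded measurable. Define μ₂(dx) = Z^{-1} exp(−δψ(x)) μ₁(dx). Then μ₂ satisfies LSI(ρ₂) with ρ₂ = ρ₁ exp(−osc δψ), where osc δψ = sup δψ − inf δψ. -/

import Mathlib

open MeasureTheory

/-- The entropy functional. -/
noncomputable def Ent {α : Type*} [MeasurableSpace α] (ν : Measure α) (g : α → ℝ) : ℝ :=
  ∫ x, g x * Real.log (g x) ∂ν - (∫ x, g x ∂ν) * Real.log (∫ x, g x ∂ν)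

/-- The logarithmic Sobolev inequality with constant `ρ` on a Euclidean space. -/
def LSI {E : Type*} [NormedAddCommGroup E] [InnerProductSpace ℝ E] [CompleteSpace E]
    [MeasurableSpace E] (ν : Measure E) (ρ : ℝ) : Prop :=
  ∀ f : E → ℝ, (∀ x, 0 ≤ f x) → LocallyLipschitz f → Integrable f ν →
    Ent ν f ≤ (1 / (2 * ρ)) * ∫ x, ‖gradient f x‖ ^ 2 / f x ∂ν

/-! The entropy has the variational form
`Ent ν f = inf_{t > 0} ∫ (f log f - f log t - f + t) dν`, where the integrand (the Bregman
divergence of `a ↦ a log a`) is nonnegative and the infimum is attained at `t = ∫ f dν`.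
Hence `ν ≤ C • μ` gives `Ent ν f ≤ C Ent μ f`, while `c • μ ≤ ν` gives
`∫ |∇f|²/f dμ ≤ c⁻¹ ∫ |∇f|²/f dν`, so an LSI(ρ) for `μ` yields an LSI(ρ c / C) for `ν`.
For `dμ₂ = Z⁻¹ e^{-δψ} dμ₁` one takes `c = e^{-sup δψ} / Z` and `C = e^{-inf δψ} / Z`. -/

open Real
open scoped NNReal

noncomputable def mulLogBregman (t a : ℝ) : ℝ := a * log a - a * log t - a + t

lemma mulLogBregman_nonneg {t a : ℝ} (ht : 0 < t) (ha : 0 ≤ a) : 0 ≤ mulLogBregman t a := by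
  rcases ha.eq_or_lt with rfl | ha
  · simpa [mulLogBregman] using ht.le
  · have hlog : log t - log a ≤ t / a - 1 := by
      simpa [log_div ht.ne' ha.ne'] using log_le_sub_one_of_pos (div_pos ht ha)
    have : a * (log t - log a) ≤ t - a := by
      calc a * (log t - log a) ≤ a * (t / a - 1) := mul_le_mul_of_nonneg_left hlog ha.le
        _ = t - a := by field_simp
    unfold mulLogBregman
    linarith

@[simp]
lemma mulLogBregman_self (t : ℝ) : mulLogBregman t t = 0 := by
  simp [mulLogBregman]

section Entropy

variable {α : Type*} [MeasurableSpace α] {ν : Measure α} {f : α → ℝ}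

lemma Ent_eq_integral_mulLogBregman_sub [IsProbabilityMeasure ν] (hf : Integrable f ν)
    (hfl : Integrable (fun x ↦ f x * log (f x)) ν) (t : ℝ) :
    Ent ν f = ∫ x, mulLogBregman t (f x) ∂ν - mulLogBregman t (∫ x, f x ∂ν) := by
  have hA : Integrable (fun x ↦ f x * log (f x) - f x * log t) ν := hfl.sub (hf.mul_const _)
  have hB : Integrable (fun x ↦ f x * log (f x) - f x * log t - f x) ν := hA.sub hf
  simp only [Ent, mulLogBregman]
  rw [integral_add hB (integrable_const t), integral_sub hA hf,
    integral_sub hfl (hf.mul_const _), integral_mul_const, integral_const, probReal_univ,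
    one_smul]
  ring

lemma Ent_le_integral_mulLogBregman [IsProbabilityMeasure ν] (hf0 : ∀ x, 0 ≤ f x)
    (hf : Integrable f ν) (hfl : Integrable (fun x ↦ f x * log (f x)) ν) {t : ℝ} (ht : 0 < t) :
    Ent ν f ≤ ∫ x, mulLogBregman t (f x) ∂ν := by
  rw [Ent_eq_integral_mulLogBregman_sub hf hfl t]
  linarith [mulLogBregman_nonneg ht (integral_nonneg (μ := ν) hf0)]

lemma Ent_eq_integral_mulLogBregman [IsProbabilityMeasure ν] (hf : Integrable f ν)
    (hfl : Integrable (fun x ↦ f x * log (f x)) ν) :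
    Ent ν f = ∫ x, mulLogBregman (∫ y, f y ∂ν) (f x) ∂ν := by
  simp [Ent_eq_integral_mulLogBregman_sub hf hfl (∫ y, f y ∂ν)]

lemma Ent_congr_ae {g : α → ℝ} (hfg : f =ᵐ[ν] g) : Ent ν f = Ent ν g := by
  have hfgl : (fun x ↦ f x * log (f x)) =ᵐ[ν] fun x ↦ g x * log (g x) := by
    filter_upwards [hfg] with x hx using by rw [hx]
  simp only [Ent, integral_congr_ae hfg, integral_congr_ae hfgl]

lemma Ent_zero : Ent ν 0 = 0 := by
  simp [Ent]

lemma Ent_const_mul_of_not_integrable (hf : Integrable f ν)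
    (hfl : ¬Integrable (fun x ↦ f x * log (f x)) ν) {c : ℝ} (hc : c ≠ 0) :
    Ent ν (fun x ↦ c * f x) = -((c * ∫ x, f x ∂ν) * log (c * ∫ x, f x ∂ν)) := by
  have hscale : ∀ a : ℝ, c * a * log (c * a) = c * (a * log a) + c * log c * a := by
    intro a
    rcases eq_or_ne a 0 with rfl | ha
    · simp
    · rw [log_mul hc ha]; ring
  have hcfl : ¬Integrable (fun x ↦ c * f x * log (c * f x)) ν := by
    refine fun h ↦ hfl ?_
    refine ((h.sub (hf.const_mul (c * log c))).const_mul c⁻¹).congr (ae_of_all _ fun x ↦ ?_)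
    simp only [hscale, Pi.sub_apply, add_sub_cancel_right, inv_mul_cancel_left₀ hc]
  simp only [Ent, integral_undef hcfl, integral_const_mul]
  ring

end Entropy

section LSI

variable {E : Type*} [NormedAddCommGroup E] [InnerProductSpace ℝ E] [CompleteSpace E]

lemma gradient_const_smul_field (c : ℝ) (f : E → ℝ) : gradient (c • f) = c • gradient f := by
  ext1 x
  simp only [gradient, fderiv_const_smul_field, Pi.smul_apply, map_smul]

variable [MeasurableSpace E]

noncomputable def fisherInformation (ν : Measure E) (f : E → ℝ) : ℝ :=
  ∫ x, ‖gradient f x‖ ^ 2 / f x ∂ν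

lemma fisherInformation_const_mul (ν : Measure E) (f : E → ℝ) {c : ℝ} (hc : 0 < c) :
    fisherInformation ν (fun x ↦ c * f x) = c * fisherInformation ν f := by
  have hgrad : gradient (fun x ↦ c * f x) = c • gradient f := gradient_const_smul_field c f
  simp only [fisherInformation, hgrad, ← integral_const_mul]
  congr 1
  ext x
  rcases eq_or_ne (f x) 0 with hfx | hfx
  · simp [hfx]
  · rw [Pi.smul_apply, norm_smul, Real.norm_of_nonneg hc.le]
    field_simp

/-- Were `f log f` not integrable, its Bochner integral would be `0`, so
`Ent ν (c f) = -(c t) log (c t)` with `t = ∫ f dν`; as `c → 0` this beats the right-hand side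
`c · const` of the inequality for `c f`. -/
theorem LSI.integrable_mul_log {ν : Measure E} {ρ : ℝ} (h : LSI ν ρ) {f : E → ℝ}
    (hf0 : ∀ x, 0 ≤ f x) (hfL : LocallyLipschitz f) (hf : Integrable f ν) :
    Integrable (fun x ↦ f x * log (f x)) ν := by
  set t := ∫ x, f x ∂ν with ht_def
  rcases (integral_nonneg hf0 : 0 ≤ t).eq_or_lt with ht | ht
  · have hf_ae : f =ᵐ[ν] 0 := (integral_eq_zero_iff_of_nonneg hf0 hf).1 ht.symm
    refine (integrable_zero E ℝ ν).congr ?_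
    filter_upwards [hf_ae] with x hx
    simp [hx]
  by_contra hfl
  set K := 1 / (2 * ρ) * fisherInformation ν f
  set s := exp (-(K / t) - 1)
  have hs : 0 < s := exp_pos _
  have hc : 0 < s / t := div_pos hs ht
  have hLSI := h (fun x ↦ s / t * f x) (fun x ↦ mul_nonneg hc.le (hf0 x))
    ((lipschitzWith_smul (s / t)).locallyLipschitz.comp hfL) (hf.const_mul _)
  have hst : s / t * t = s := div_mul_cancel₀ s ht.ne'
  change Ent ν _ ≤ 1 / (2 * ρ) * fisherInformation ν _ at hLSI
  rw [Ent_const_mul_of_not_integrable hf hfl hc.ne', ← ht_def, hst, log_exp,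
    fisherInformation_const_mul ν f hc] at hLSI
  have hK : 1 / (2 * ρ) * (s / t * fisherInformation ν f) = s * (K / t) := by ring
  rw [hK] at hLSI
  linarith

end LSI

section Comparison

variable {α : Type*} [MeasurableSpace α] {μ ν : Measure α} {c C : ℝ≥0} {g : α → ℝ}

lemma MeasureTheory.Integrable.of_smul_le (hg : Integrable g ν) (hc : c ≠ 0)
    (hcν : c • μ ≤ ν) : Integrable g μ := by
  refine (hg.smul_measure_nnreal (c := c⁻¹)).mono_measure ?_
  calc μ = c⁻¹ • c • μ := by rw [smul_smul, inv_mul_cancel₀ hc, one_smul]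
    _ ≤ c⁻¹ • ν := by gcongr

lemma MeasureTheory.Integrable.of_le_smul (hg : Integrable g μ) (hνC : ν ≤ C • μ) :
    Integrable g ν :=
  hg.smul_measure_nnreal.mono_measure hνC

lemma integral_le_mul_integral_of_le_smul (hνC : ν ≤ C • μ) (hg0 : 0 ≤ᵐ[μ] g)
    (hg : Integrable g μ) : ∫ x, g x ∂ν ≤ C * ∫ x, g x ∂μ :=
  (integral_mono_measure hνC (Measure.ae_smul_measure hg0 _) hg.smul_measure_nnreal).trans_eq
    (integral_smul_nnreal_measure g C)

lemma mul_integral_le_integral_of_smul_le (hcν : c • μ ≤ ν) (hνC : ν ≤ C • μ)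
    (hg0 : 0 ≤ᵐ[ν] g) : c * ∫ x, g x ∂μ ≤ ∫ x, g x ∂ν := by
  by_cases hg : Integrable g ν
  · exact (integral_smul_nnreal_measure g c).symm.trans_le (integral_mono_measure hcν hg0 hg)
  · have hgμ : ¬Integrable g μ := fun h ↦ hg (h.of_le_smul hνC)
    simp [integral_undef hg, integral_undef hgμ]

lemma Ent_le_mul_Ent_of_le_smul [IsProbabilityMeasure μ] [IsProbabilityMeasure ν]
    (hνC : ν ≤ C • μ) (hg0 : ∀ x, 0 ≤ g x) (hg : Integrable g μ)
    (hgl : Integrable (fun x ↦ g x * log (g x)) μ) : Ent ν g ≤ C * Ent μ g := by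
  set t := ∫ x, g x ∂μ
  rcases (integral_nonneg hg0 : 0 ≤ t).eq_or_lt with ht | ht
  · have hg_ae : g =ᵐ[μ] 0 := (integral_eq_zero_iff_of_nonneg hg0 hg).1 ht.symm
    have hνμ : ν ≪ μ := (Measure.absolutelyContinuous_of_le hνC).trans
      (Measure.smul_absolutelyContinuous)
    simp only [Ent_congr_ae hg_ae, Ent_congr_ae (hνμ.ae_le hg_ae), Ent_zero, mul_zero, le_refl]
  have hφ : Integrable (fun x ↦ mulLogBregman t (g x)) μ :=
    ((hgl.sub (hg.mul_const _)).sub hg).add (integrable_const t)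
  calc Ent ν g ≤ ∫ x, mulLogBregman t (g x) ∂ν :=
        Ent_le_integral_mulLogBregman hg0 (hg.of_le_smul hνC) (hgl.of_le_smul hνC) ht
    _ ≤ C * ∫ x, mulLogBregman t (g x) ∂μ := integral_le_mul_integral_of_le_smul hνC
        (ae_of_all _ fun x ↦ mulLogBregman_nonneg ht (hg0 x)) hφ
    _ = C * Ent μ g := by rw [Ent_eq_integral_mulLogBregman hg hgl]

end Comparison

theorem LSI.of_smul_le_of_le_smul {E : Type*} [NormedAddCommGroup E] [InnerProductSpace ℝ E]
    [CompleteSpace E] [MeasurableSpace E] {μ ν : Measure E} [IsProbabilityMeasure μ]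
    [IsProbabilityMeasure ν] {ρ : ℝ} (h : LSI μ ρ) (hρ : 0 ≤ ρ) {c C : ℝ≥0} (hc : c ≠ 0)
    (hcν : c • μ ≤ ν) (hνC : ν ≤ C • μ) : LSI ν (ρ * c / C) := by
  intro f hf0 hfL hfν
  have hfμ : Integrable f μ := hfν.of_smul_le hc hcν
  have hfisher : c * fisherInformation μ f ≤ fisherInformation ν f :=
    mul_integral_le_integral_of_smul_le hcν hνC
      (ae_of_all _ fun x ↦ div_nonneg (sq_nonneg _) (hf0 x))
  have hc' : (0 : ℝ) < c := by positivity
  change Ent ν f ≤ 1 / (2 * (ρ * c / C)) * fisherInformation ν f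
  calc Ent ν f ≤ C * Ent μ f :=
        Ent_le_mul_Ent_of_le_smul hνC hf0 hfμ (h.integrable_mul_log hf0 hfL hfμ)
    _ ≤ C * (1 / (2 * ρ) * fisherInformation μ f) := by gcongr; exact h f hf0 hfL hfμ
    _ ≤ C * (1 / (2 * ρ) * (fisherInformation ν f / c)) := by
        gcongr
        rwa [le_div_iff₀ hc', mul_comm]
    _ = 1 / (2 * (ρ * c / C)) * fisherInformation ν f := by
        simp only [div_eq_mul_inv, mul_inv, inv_inv]
        ring

section WithDensity

variable {α : Type*} [MeasurableSpace α] {μ : Measure α} {r : α → ℝ}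

lemma smul_le_withDensity_ofReal {c : ℝ≥0} (hc : ∀ x, c ≤ r x) :
    c • μ ≤ μ.withDensity fun x ↦ ENNReal.ofReal (r x) := by
  rw [← Measure.coe_nnreal_smul, ← withDensity_const]
  exact withDensity_mono <| ae_of_all _ fun x ↦
    ENNReal.ofReal_coe_nnreal.symm.trans_le (ENNReal.ofReal_le_ofReal (hc x))

lemma withDensity_ofReal_le_smul {C : ℝ≥0} (hC : ∀ x, r x ≤ C) :
    μ.withDensity (fun x ↦ ENNReal.ofReal (r x)) ≤ C • μ := by
  rw [← Measure.coe_nnreal_smul, ← withDensity_const]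
  exact withDensity_mono (ae_of_all _ fun x ↦ ENNReal.ofReal_le_of_le_toReal (hC x))

lemma isProbabilityMeasure_withDensity_ofReal (hr0 : 0 ≤ᵐ[μ] r) (hr : Integrable r μ)
    (hr1 : ∫ x, r x ∂μ = 1) :
    IsProbabilityMeasure (μ.withDensity fun x ↦ ENNReal.ofReal (r x)) := by
  constructor
  rw [withDensity_apply _ MeasurableSet.univ, Measure.restrict_univ,
    ← ofReal_integral_eq_lintegral_ofReal hr hr0, hr1, ENNReal.ofReal_one]

end WithDensity

theorem holley_stroock_general {X : Type*} [NormedAddCommGroup X] [InnerProductSpace ℝ X]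
    [CompleteSpace X] [MeasurableSpace X]
    (μ₁ : Measure X) [IsProbabilityMeasure μ₁] (ρ₁ : ℝ) (hρ₁ : 0 < ρ₁)
    (h1 : LSI μ₁ ρ₁) (δψ : X → ℝ) (hmeas : Measurable δψ)
    (hba : BddAbove (Set.range δψ)) (hbb : BddBelow (Set.range δψ))
    (Z : ℝ) (hZ : Z = ∫ x, Real.exp (-δψ x) ∂μ₁)
    (μ₂ : Measure X)
    (hμ₂ : μ₂ = μ₁.withDensity fun x => ENNReal.ofReal (Real.exp (-δψ x) / Z)) :
    LSI μ₂ (ρ₁ * Real.exp (-(sSup (Set.range δψ) - sInf (Set.range δψ)))) := by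
  set M := sSup (Set.range δψ)
  set m := sInf (Set.range δψ)
  have hM : ∀ x, δψ x ≤ M := fun x ↦ le_csSup hba ⟨x, rfl⟩
  have hm : ∀ x, m ≤ δψ x := fun x ↦ csInf_le hbb ⟨x, rfl⟩
  have hint : Integrable (fun x ↦ exp (-δψ x)) μ₁ :=
    .of_bound hmeas.neg.exp.aestronglyMeasurable (exp (-m)) <| ae_of_all _ fun x ↦ by
      simpa using neg_le_neg (hm x)
  have hZ0 : 0 < Z := hZ ▸ integral_exp_pos hint
  set a := (exp (-M) / Z).toNNReal
  set b := (exp (-m) / Z).toNNReal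
  have ha : (a : ℝ) = exp (-M) / Z := Real.coe_toNNReal _ (by positivity)
  have hb : (b : ℝ) = exp (-m) / Z := Real.coe_toNNReal _ (by positivity)
  have har : ∀ x, a ≤ exp (-δψ x) / Z := fun x ↦ by
    rw [ha]; gcongr; exact hM x
  have hrb : ∀ x, exp (-δψ x) / Z ≤ b := fun x ↦ by
    rw [hb]; gcongr; exact hm x
  have : IsProbabilityMeasure μ₂ := hμ₂ ▸ isProbabilityMeasure_withDensity_ofReal
    (ae_of_all _ fun x ↦ by positivity) (hint.div_const Z)
    (by rw [integral_div, ← hZ, div_self hZ0.ne'])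
  have hρ : ρ₁ * exp (-(M - m)) = ρ₁ * a / b := by
    rw [ha, hb, neg_sub, exp_sub, exp_neg M, exp_neg m]
    field_simp
  rw [hρ]
  exact h1.of_smul_le_of_le_smul hρ₁.le (by positivity) (hμ₂ ▸ smul_le_withDensity_ofReal har)
    (hμ₂ ▸ withDensity_ofReal_le_smul hrb)

/-- Holley–Stroock perturbation principle: a bounded perturbation `δψ`
of the Hamiltonian degrades the LSI constant by at most `exp(−osc δψ)`. -/
theorem holley_stroock {X : Type*} [NormedAddCommGroup X] [InnerProductSpace ℝ X]
    [CompleteSpace X] [MeasurableSpace X] [BorelSpace X]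
    (μ₁ : Measure X) [IsProbabilityMeasure μ₁] (ρ₁ : ℝ) (hρ₁ : 0 < ρ₁)
    (h1 : LSI μ₁ ρ₁) (δψ : X → ℝ) (hmeas : Measurable δψ)
    (hba : BddAbove (Set.range δψ)) (hbb : BddBelow (Set.range δψ))
    (Z : ℝ) (hZ : Z = ∫ x, Real.exp (-δψ x) ∂μ₁)
    (μ₂ : Measure X)
    (hμ₂ : μ₂ = μ₁.withDensity fun x => ENNReal.ofReal (Real.exp (-δψ x) / Z)) :
    LSI μ₂ (ρ₁ * Real.exp (-(sSup (Set.range δψ) - sInf (Set.range δψ)))) :=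
  holley_stroock_general μ₁ ρ₁ hρ₁ h1 δψ hmeas hba hbb Z hZ μ₂ hμ₂
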